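/- Let M^m be a complete biharmonic hypersurface of constant scalar curvature in a non-positively curved Einstein manifold N^{m+1} with Ric^N = λh. Then the pointwise inequality Δ|∇H|² ≥ 2((5/4)m²H² + |A|²)|∇H|² ≥ (1/8)m(5m+4)|∇H²|² ≥ 0 holds. -/

import Mathlib

/-!
Bochner's formula gives `Δ|∇H|² ≥ 2 (Ric(∇H, ∇H) + ⟨∇H, ∇ΔH⟩)`. The second biharmonic equation
makes `∇H` an eigenvector of `A` with eigenvalue `-mH/2`, so the Gauss equation and `R^N ≤ 0`
give `Ric(∇H, ∇H) ≥ (λ - 3/4 m²H²)|∇H|²`. By the traced Gauss equation, constant scalar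
curvature makes `|A|² - m²H²` constant, so `ΔH = H(|A|² - λ)` is a cubic polynomial in `H` and
`⟨∇H, ∇ΔH⟩ = (|A|² - λ + 2m²H²)|∇H|²`. Adding the two yields the first inequality; the second is
Newton's inequality `|A|² ≥ mH²` combined with `|∇H²|² = 4H²|∇H|²`.
-/

noncomputable section

open scoped RealInnerProductSpace BigOperators

/-- Abstract data encoding an isometrically immersed (connected, orientable) hypersurface
`M^m ↪ N^{m+1}`: `V` is a model for the tangent spaces of `M` (an `m`-dimensional real
inner product space), `A` is the shape operator field, `H` the mean curvature function
(so `trace A = m H`), together with the gradient, Laplace and Hessian operators and the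
Ricci curvature of the induced metric, subject to the standard rules of Riemannian
calculus (connectedness of `M` is encoded by `const_of_grad`, and the Bochner formula
holds).  `mixed p X Y` denotes the ambient curvature term `R^N(X, ξ, Y, ξ)` at `p`,
where `ξ` is the chosen unit normal. -/
structure HypersurfaceData (m : ℕ) (M : Type) (V : Type)
    [NormedAddCommGroup V] [InnerProductSpace ℝ V] [FiniteDimensional ℝ V] : Type where
  dimV : Module.finrank ℝ V = m
  /-- the shape operator -/
  A : M → V →ₗ[ℝ] V
  A_symm : ∀ p (x y : V), ⟪A p x, y⟫ = ⟪x, A p y⟫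
  /-- the mean curvature function -/
  H : M → ℝ
  trace_A : ∀ p, LinearMap.trace ℝ V (A p) = m * H p
  /-- the gradient operator of `(M, g)` -/
  grad : (M → ℝ) → M → V
  /-- the Laplace operator of `(M, g)` -/
  lap : (M → ℝ) → M → ℝ
  /-- `hess2 f` is `|∇df|²`, the squared norm of the Hessian of `f` -/
  hess2 : (M → ℝ) → M → ℝ
  /-- the Ricci curvature of `(M, g)` -/
  ricci : M → V → V → ℝ
  /-- `mixed p X Y = R^N(X, ξ, Y, ξ)` -/
  mixed : M → V → V → ℝ
  grad_add : ∀ f g : M → ℝ, grad (fun p => f p + g p) = fun p => grad f p + grad g p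
  grad_mul : ∀ f g : M → ℝ,
    grad (fun p => f p * g p) = fun p => f p • grad g p + g p • grad f p
  grad_const : ∀ c : ℝ, grad (fun _ => c) = fun _ => 0
  lap_const : ∀ c : ℝ, lap (fun _ => c) = fun _ => 0
  const_of_grad : ∀ f : M → ℝ, (∀ p, grad f p = 0) → ∀ p q, f p = f q
  hess2_nonneg : ∀ f p, 0 ≤ hess2 f p
  hess2_bound : ∀ f p, (lap f p) ^ 2 ≤ m * hess2 f p
  bochner : ∀ (f : M → ℝ) (p : M),
    lap (fun q => ‖grad f q‖ ^ 2) p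
      = 2 * (hess2 f p + ricci p (grad f p) (grad f p) + ⟪grad f p, grad (lap f) p⟫)

namespace HypersurfaceData

variable {m : ℕ} {M V : Type} [NormedAddCommGroup V] [InnerProductSpace ℝ V]
  [FiniteDimensional ℝ V] (D : HypersurfaceData m M V)

/-- `|A|²`, the squared norm of the shape operator. -/
def normA2 (p : M) : ℝ := LinearMap.trace ℝ V (D.A p ∘ₗ D.A p)

/-- The scalar curvature of `M` (trace of the Ricci curvature). -/
def scal (p : M) : ℝ :=
  ∑ i, D.ricci p (stdOrthonormalBasis ℝ V i) (stdOrthonormalBasis ℝ V i)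

/-- `M` has constant scalar curvature. -/
def ConstScal : Prop := ∀ p q, D.scal p = D.scal q

/-- `M` is minimal, i.e. `H ≡ 0`. -/
def Minimal : Prop := ∀ p, D.H p = 0

/-- The biharmonic equations for a hypersurface of an Einstein manifold with
`Ric^N = lam·h` :  `ΔH = H(|A|² - lam)` and `A(∇H) + (m/2) H ∇H = 0`. -/
def IsBiharmonic (lam : ℝ) : Prop :=
  (∀ p, D.lap D.H p = D.H p * (D.normA2 p - lam)) ∧
  (∀ p, D.A p (D.grad D.H p) + ((m : ℝ) / 2 * D.H p) • D.grad D.H p = 0)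

/-- The contracted Gauss equation for a hypersurface of a space form of constant
sectional curvature `C`, where `Ric^N(X,Y) = m C ⟨X,Y⟩` and `R^N(X,ξ,Y,ξ) = C ⟨X,Y⟩`
for tangent `X, Y`. -/
def SpaceFormGauss (C : ℝ) : Prop :=
  ∀ p (X Y : V), (m : ℝ) * C * ⟪X, Y⟫
    = D.ricci p X Y + ⟪D.A p X, D.A p Y⟫ - m * D.H p * ⟪D.A p X, Y⟫ + C * ⟪X, Y⟫

/-- The contracted Gauss equation for a hypersurface of an Einstein manifold with
`Ric^N = lam·h`. -/
def EinsteinAmbientGauss (lam : ℝ) : Prop :=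
  ∀ p (X Y : V), lam * ⟪X, Y⟫
    = D.ricci p X Y + ⟪D.A p X, D.A p Y⟫ - m * D.H p * ⟪D.A p X, Y⟫ + D.mixed p X Y

/-- `Ric^N(ξ,ξ) = lam`: the trace over the tangent directions of `R^N(·,ξ,·,ξ)`
equals the ambient Ricci curvature in the normal direction. -/
def MixedTrace (lam : ℝ) : Prop :=
  ∀ p, ∑ i, D.mixed p (stdOrthonormalBasis ℝ V i) (stdOrthonormalBasis ℝ V i) = lam

end HypersurfaceData

namespace HypersurfaceData

variable {m : ℕ} {M V : Type} [NormedAddCommGroup V] [InnerProductSpace ℝ V]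
  [FiniteDimensional ℝ V] (D : HypersurfaceData m M V)

lemma normA2_eq_sum_norm_sq (p : M) :
    D.normA2 p = ∑ i, ‖D.A p (stdOrthonormalBasis ℝ V i)‖ ^ 2 := by
  rw [normA2, LinearMap.trace_eq_sum_inner _ (stdOrthonormalBasis ℝ V)]
  refine Finset.sum_congr rfl fun i _ => ?_
  rw [LinearMap.comp_apply, ← D.A_symm, real_inner_self_eq_norm_sq]

lemma normA2_nonneg (p : M) : 0 ≤ D.normA2 p := by
  rw [normA2_eq_sum_norm_sq]
  positivity

lemma trace_A_eq_sum_inner (p : M) :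
    (m : ℝ) * D.H p = ∑ i, ⟪stdOrthonormalBasis ℝ V i, D.A p (stdOrthonormalBasis ℝ V i)⟫ := by
  rw [← D.trace_A, LinearMap.trace_eq_sum_inner _ (stdOrthonormalBasis ℝ V)]

/-- Cauchy–Schwarz on the diagonal entries of `A` in an orthonormal basis. -/
lemma sq_mul_H_le_mul_normA2 (p : M) : ((m : ℝ) * D.H p) ^ 2 ≤ m * D.normA2 p := by
  set b := stdOrthonormalBasis ℝ V
  have hdiag : ∀ i, ⟪b i, D.A p (b i)⟫ ^ 2 ≤ ‖D.A p (b i)‖ ^ 2 := fun i => by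
    simpa [b.orthonormal.1 i] using
      pow_le_pow_left₀ (abs_nonneg _) (abs_real_inner_le_norm (b i) (D.A p (b i))) 2
  calc ((m : ℝ) * D.H p) ^ 2 = (∑ i, ⟪b i, D.A p (b i)⟫) ^ 2 := by rw [trace_A_eq_sum_inner]
    _ ≤ m * ∑ i, ⟪b i, D.A p (b i)⟫ ^ 2 := by
      simpa [D.dimV] using sq_sum_le_card_mul_sum_sq (s := Finset.univ)
        (f := fun i => ⟪b i, D.A p (b i)⟫)
    _ ≤ m * D.normA2 p := by
      rw [normA2_eq_sum_norm_sq]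
      exact mul_le_mul_of_nonneg_left (Finset.sum_le_sum fun i _ => hdiag i) m.cast_nonneg

lemma mul_H_sq_le_normA2 (p : M) : (m : ℝ) * D.H p ^ 2 ≤ D.normA2 p := by
  rcases (Nat.zero_le m).eq_or_lt with hm | hm
  · simpa [← hm] using D.normA2_nonneg p
  · have hm : (0 : ℝ) < m := by exact_mod_cast hm
    nlinarith [D.sq_mul_H_le_mul_normA2 p]

lemma normA2_eq_of_gauss {lam : ℝ} (hgauss : D.EinsteinAmbientGauss lam)
    (hmix : D.MixedTrace lam) (p : M) :
    D.normA2 p = (m : ℝ) ^ 2 * D.H p ^ 2 + (lam * ((m : ℝ) - 1) - D.scal p) := by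
  set b := stdOrthonormalBasis ℝ V
  have htraced : ∑ i, lam * ⟪b i, b i⟫
      = ∑ i, (D.ricci p (b i) (b i) + ⟪D.A p (b i), D.A p (b i)⟫
          - m * D.H p * ⟪D.A p (b i), b i⟫ + D.mixed p (b i) (b i)) :=
    Finset.sum_congr rfl fun i _ => hgauss p (b i) (b i)
  have hA : ∑ i, ⟪D.A p (b i), b i⟫ = (m : ℝ) * D.H p := by
    rw [trace_A_eq_sum_inner]
    exact Finset.sum_congr rfl fun i _ => D.A_symm p _ _
  simp only [Finset.sum_add_distrib, Finset.sum_sub_distrib, ← Finset.mul_sum, hA,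
    real_inner_self_eq_norm_sq, b.orthonormal.1] at htraced
  rw [hmix p, ← normA2_eq_sum_norm_sq] at htraced
  simp only [one_pow, Finset.sum_const, Finset.card_univ, D.dimV, Fintype.card_fin, nsmul_eq_mul,
    mul_one] at htraced
  rw [scal]
  linarith

lemma grad_const_mul (c : ℝ) (f : M → ℝ) :
    D.grad (fun q => c * f q) = fun q => c • D.grad f q := by
  rw [D.grad_mul, D.grad_const]
  simp only [smul_zero, add_zero]

lemma grad_pow_succ (f : M → ℝ) (n : ℕ) :
    D.grad (fun q => f q ^ (n + 1)) = fun q => (((n : ℝ) + 1) * f q ^ n) • D.grad f q := by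
  induction n with
  | zero => simp
  | succ n ih =>
    simp only [pow_succ' _ (n + 1), D.grad_mul, ih]
    funext q
    rw [smul_smul, ← add_smul]
    push_cast
    ring_nf

lemma norm_grad_sq_sq (f : M → ℝ) (p : M) :
    ‖D.grad (fun q => f q ^ 2) p‖ ^ 2 = 4 * f p ^ 2 * ‖D.grad f p‖ ^ 2 := by
  rw [D.grad_pow_succ f 1, norm_smul, mul_pow, Real.norm_eq_abs, sq_abs]
  ring

lemma two_mul_ricci_add_inner_le_lap_norm_grad_sq (f : M → ℝ) (p : M) :
    2 * (D.ricci p (D.grad f p) (D.grad f p) + ⟪D.grad f p, D.grad (D.lap f) p⟫)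
      ≤ D.lap (fun q => ‖D.grad f q‖ ^ 2) p := by
  rw [D.bochner]
  linarith [D.hess2_nonneg f p]

lemma ricci_eq_of_A_eq_smul {lam : ℝ} (hgauss : D.EinsteinAmbientGauss lam) {p : M}
    {X : V} {c : ℝ} (hX : D.A p X = c • X) :
    D.ricci p X X = (lam - c ^ 2 + m * D.H p * c) * ‖X‖ ^ 2 - D.mixed p X X := by
  have h := hgauss p X X
  rw [hX, real_inner_smul_left, real_inner_smul_left, real_inner_smul_right,
    real_inner_self_eq_norm_sq] at h
  linear_combination -h

lemma ricci_grad_H_ge {lam : ℝ} (hgauss : D.EinsteinAmbientGauss lam)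
    (hnonpos : ∀ p (X : V), D.mixed p X X ≤ 0) (hbh : D.IsBiharmonic lam) (p : M) :
    (lam - 3 / 4 * (m : ℝ) ^ 2 * D.H p ^ 2) * ‖D.grad D.H p‖ ^ 2
      ≤ D.ricci p (D.grad D.H p) (D.grad D.H p) := by
  have hX : D.A p (D.grad D.H p) = (-((m : ℝ) / 2 * D.H p)) • D.grad D.H p := by
    rw [neg_smul]
    exact eq_neg_of_add_eq_zero_left (hbh.2 p)
  rw [D.ricci_eq_of_A_eq_smul hgauss hX]
  nlinarith [hnonpos p (D.grad D.H p)]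

lemma inner_grad_H_grad_lap_H {lam : ℝ} (hgauss : D.EinsteinAmbientGauss lam)
    (hmix : D.MixedTrace lam) (hscal : D.ConstScal) (hbh : D.IsBiharmonic lam) (p : M) :
    ⟪D.grad D.H p, D.grad (D.lap D.H) p⟫
      = (D.normA2 p - lam + 2 * (m : ℝ) ^ 2 * D.H p ^ 2) * ‖D.grad D.H p‖ ^ 2 := by
  set c := lam * ((m : ℝ) - 1) - D.scal p
  have hA2 : ∀ q, D.normA2 q = (m : ℝ) ^ 2 * D.H q ^ 2 + c := fun q => by
    rw [D.normA2_eq_of_gauss hgauss hmix, hscal q p]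
  have hlap : D.lap D.H = fun q => (m : ℝ) ^ 2 * D.H q ^ 3 + (c - lam) * D.H q := by
    funext q
    rw [hbh.1, hA2]
    ring
  rw [hlap, D.grad_add, D.grad_const_mul, D.grad_const_mul, D.grad_pow_succ]
  simp only [smul_smul, ← add_smul, real_inner_smul_right, real_inner_self_eq_norm_sq]
  rw [hA2]
  push_cast
  ring

end HypersurfaceData

theorem pointwise_inequality_biharmonic_nonpositive_einstein_general {M V : Type}
    [NormedAddCommGroup V] [InnerProductSpace ℝ V] [FiniteDimensional ℝ V]
    {m : ℕ} (D : HypersurfaceData m M V) (lam : ℝ)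
    (hgauss : D.EinsteinAmbientGauss lam) (hmix : D.MixedTrace lam)
    (hnonpos : ∀ p (X : V), D.mixed p X X ≤ 0)
    (hscal : D.ConstScal) (hbh : D.IsBiharmonic lam) :
    ∀ p, 0 ≤ 1 / 8 * (m : ℝ) * (5 * (m : ℝ) + 4)
            * ‖D.grad (fun q => (D.H q) ^ 2) p‖ ^ 2 ∧
      1 / 8 * (m : ℝ) * (5 * (m : ℝ) + 4) * ‖D.grad (fun q => (D.H q) ^ 2) p‖ ^ 2
        ≤ 2 * (5 / 4 * (m : ℝ) ^ 2 * (D.H p) ^ 2 + D.normA2 p) * ‖D.grad D.H p‖ ^ 2 ∧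
      2 * (5 / 4 * (m : ℝ) ^ 2 * (D.H p) ^ 2 + D.normA2 p) * ‖D.grad D.H p‖ ^ 2
        ≤ D.lap (fun q => ‖D.grad D.H q‖ ^ 2) p := by
  intro p
  have hnewton := D.mul_H_sq_le_normA2 p
  have hric := D.ricci_grad_H_ge hgauss hnonpos hbh p
  have hinner := D.inner_grad_H_grad_lap_H hgauss hmix hscal hbh p
  have hbochner := D.two_mul_ricci_add_inner_le_lap_norm_grad_sq D.H p
  refine ⟨by positivity, ?_, ?_⟩
  · rw [D.norm_grad_sq_sq]
    nlinarith [mul_le_mul_of_nonneg_right hnewton (sq_nonneg ‖D.grad D.H p‖)]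
  · linarith

/-- **The pointwise inequality chain for complete biharmonic hypersurfaces of constant
scalar curvature in a non-positively curved Einstein manifold.**  Let `M^m` be a
complete biharmonic hypersurface of constant scalar curvature in an Einstein manifold
`N^{m+1}` with `Ric^N = λ h` and non-positive sectional curvature (so that
`R^N(X,ξ,X,ξ) ≤ 0`, encoded by `hnonpos`).  Then at every point
`Δ|∇H|² ≥ 2((5/4)m²H² + |A|²)|∇H|² ≥ (1/8)m(5m+4)|∇H²|² ≥ 0`. -/
theorem pointwise_inequality_biharmonic_nonpositive_einstein {M V : Type}
    [NormedAddCommGroup V] [InnerProductSpace ℝ V] [FiniteDimensional ℝ V]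
    {m : ℕ} (hm : 0 < m) (D : HypersurfaceData m M V) (lam : ℝ)
    (hgauss : D.EinsteinAmbientGauss lam) (hmix : D.MixedTrace lam)
    (hnonpos : ∀ p (X : V), D.mixed p X X ≤ 0)
    (hscal : D.ConstScal) (hbh : D.IsBiharmonic lam) :
    ∀ p, 0 ≤ 1 / 8 * (m : ℝ) * (5 * (m : ℝ) + 4)
            * ‖D.grad (fun q => (D.H q) ^ 2) p‖ ^ 2 ∧
      1 / 8 * (m : ℝ) * (5 * (m : ℝ) + 4) * ‖D.grad (fun q => (D.H q) ^ 2) p‖ ^ 2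
        ≤ 2 * (5 / 4 * (m : ℝ) ^ 2 * (D.H p) ^ 2 + D.normA2 p) * ‖D.grad D.H p‖ ^ 2 ∧
      2 * (5 / 4 * (m : ℝ) ^ 2 * (D.H p) ^ 2 + D.normA2 p) * ‖D.grad D.H p‖ ^ 2
        ≤ D.lap (fun q => ‖D.grad D.H q‖ ^ 2) p :=
  pointwise_inequality_biharmonic_nonpositive_einstein_general D lam hgauss hmix hnonpos hscal hbh
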